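/- Let W be an irreducible T-module with endpoint r and diameter d. Then for all i ∈ ℤ and all j with r ≤ j ≤ r+d, Q_i·(E*_j W) = E*_{i+j} W. -/

import Mathlib

open Matrix BigOperators

noncomputable section

variable {X : Type*} [Fintype X] [DecidableEq X]

/-- The adjacency matrix of a graph, over ℂ. -/
def adjMat (G : SimpleGraph X) [DecidableRel G.Adj] : Matrix X X ℂ :=
  Matrix.of fun y z => if G.Adj y z then 1 else 0

/-- The dual idempotent `E*_i`: diagonal 0-1 matrix projecting onto
vertices at distance `i` from `x` (zero for `i` outside the distance range). -/
def Estar (G : SimpleGraph X) (x : X) (i : ℤ) : Matrix X X ℂ :=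
  Matrix.diagonal fun y => if (G.dist x y : ℤ) = i then 1 else 0

/-- The lowering matrix `L = Σ_{i=1}^D E*_{i-1} A E*_i`. -/
def lowerM (G : SimpleGraph X) [DecidableRel G.Adj] (x : X) (D : ℕ) : Matrix X X ℂ :=
  ∑ i ∈ Finset.Icc 1 D, Estar G x ((i : ℤ) - 1) * adjMat G * Estar G x i

/-- The flat matrix `F = Σ_{i=0}^D E*_i A E*_i`. -/
def flatM (G : SimpleGraph X) [DecidableRel G.Adj] (x : X) (D : ℕ) : Matrix X X ℂ :=
  ∑ i ∈ Finset.range (D + 1), Estar G x i * adjMat G * Estar G x i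

/-- The raising matrix `R = Σ_{i=0}^{D-1} E*_{i+1} A E*_i`. -/
def raiseM (G : SimpleGraph X) [DecidableRel G.Adj] (x : X) (D : ℕ) : Matrix X X ℂ :=
  ∑ i ∈ Finset.range D, Estar G x ((i : ℤ) + 1) * adjMat G * Estar G x i

/-- The subconstituent (Terwilliger) algebra `T`, generated by `A` and the `E*_i`. -/
def Talg (G : SimpleGraph X) [DecidableRel G.Adj] (x : X) (D : ℕ) :
    Subalgebra ℂ (Matrix X X ℂ) :=
  Algebra.adjoin ℂ (insert (adjMat G) (Estar G x '' Set.Icc (0 : ℤ) (D : ℤ)))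

/-- The quantum adjacency algebra `Q`, generated by `L, F, R`. -/
def Qalg (G : SimpleGraph X) [DecidableRel G.Adj] (x : X) (D : ℕ) :
    Subalgebra ℂ (Matrix X X ℂ) :=
  Algebra.adjoin ℂ {lowerM G x D, flatM G x D, raiseM G x D}

/-- The dual adjacency algebra `M*`, the span of the `E*_i`. -/
def Mstar (G : SimpleGraph X) (x : X) (D : ℕ) : Submodule ℂ (Matrix X X ℂ) :=
  Submodule.span ℂ (Estar G x '' Set.Icc (0 : ℤ) (D : ℤ))

/-- The graded component `T_n = Σ_i E*_{i+n} T E*_i`. -/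
def Tgraded (G : SimpleGraph X) [DecidableRel G.Adj] (x : X) (D : ℕ) (n : ℤ) :
    Submodule ℂ (Matrix X X ℂ) :=
  Submodule.span ℂ
    {M | ∃ i : ℤ, ∃ S ∈ Talg G x D, M = Estar G x (i + n) * S * Estar G x i}

/-- The graded component `Q_n = Q ∩ T_n`. -/
def Qgraded (G : SimpleGraph X) [DecidableRel G.Adj] (x : X) (D : ℕ) (n : ℤ) :
    Submodule ℂ (Matrix X X ℂ) :=
  (Subalgebra.toSubmodule (Qalg G x D)) ⊓ Tgraded G x D n

/-- `W` is an irreducible module for the algebra `A₀ ⊆ Mat_X(ℂ)` (acting on `V = ℂ^X`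
by matrix-vector multiplication). -/
def IsIrredMod (A₀ : Subalgebra ℂ (Matrix X X ℂ)) (W : Submodule ℂ (X → ℂ)) : Prop :=
  (∀ S ∈ A₀, ∀ w ∈ W, S.mulVec w ∈ W) ∧ W ≠ ⊥ ∧
    ∀ W' : Submodule ℂ (X → ℂ), W' ≤ W →
      (∀ S ∈ A₀, ∀ w ∈ W', S.mulVec w ∈ W') → W' = ⊥ ∨ W' = W

/-- The subspace `E*_i W`. -/
def Emap (G : SimpleGraph X) (x : X) (i : ℤ) (W : Submodule ℂ (X → ℂ)) :
    Submodule ℂ (X → ℂ) :=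
  W.map (Estar G x i).mulVecLin

/-- The subspace `P · W` spanned by all `S w`, `S ∈ P`, `w ∈ W`. -/
def actSp (P : Submodule ℂ (Matrix X X ℂ)) (W : Submodule ℂ (X → ℂ)) :
    Submodule ℂ (X → ℂ) :=
  Submodule.span ℂ {v | ∃ S ∈ P, ∃ w ∈ W, v = S.mulVec w}

/-- The statement: `W` has endpoint `r` and diameter `d`, i.e. `E*_i W ≠ 0`
iff `r ≤ i ≤ r + d`. -/
def HasEndpointDiam (G : SimpleGraph X) (x : X) (W : Submodule ℂ (X → ℂ))
    (r d : ℕ) : Prop :=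
  ∀ i : ℤ, Emap G x i W ≠ ⊥ ↔ ((r : ℤ) ≤ i ∧ i ≤ (r : ℤ) + (d : ℤ))

/-- `σ` restricts to an isomorphism of `Q`-modules from `U` to `W`. -/
def IsQIso (G : SimpleGraph X) [DecidableRel G.Adj] (x : X) (D : ℕ)
    (U W : Submodule ℂ (X → ℂ)) (σ : (X → ℂ) →ₗ[ℂ] (X → ℂ)) : Prop :=
  U.map σ = W ∧ (∀ u ∈ U, σ u = 0 → u = 0) ∧
    ∀ S ∈ Qalg G x D, ∀ u ∈ U, σ (S.mulVec u) = S.mulVec (σ u)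

/-- `σ` restricts to an isomorphism of `T`-modules from `U` to `W`. -/
def IsTIso (G : SimpleGraph X) [DecidableRel G.Adj] (x : X) (D : ℕ)
    (U W : Submodule ℂ (X → ℂ)) (σ : (X → ℂ) →ₗ[ℂ] (X → ℂ)) : Prop :=
  U.map σ = W ∧ (∀ u ∈ U, σ u = 0 → u = 0) ∧
    ∀ S ∈ Talg G x D, ∀ u ∈ U, σ (S.mulVec u) = S.mulVec (σ u)

/-- `σ` restricts to a quasi-isomorphism of `T`-modules from `U` to `W`,
with endpoint shift `n`. -/
def IsQuasiIso (G : SimpleGraph X) [DecidableRel G.Adj] (x : X) (D : ℕ)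
    (U W : Submodule ℂ (X → ℂ)) (σ : (X → ℂ) →ₗ[ℂ] (X → ℂ)) (n : ℤ) : Prop :=
  U.map σ = W ∧ (∀ u ∈ U, σ u = 0 → u = 0) ∧
    (∀ u ∈ U, σ ((lowerM G x D).mulVec u) = (lowerM G x D).mulVec (σ u)) ∧
    (∀ u ∈ U, σ ((flatM G x D).mulVec u) = (flatM G x D).mulVec (σ u)) ∧
    (∀ u ∈ U, σ ((raiseM G x D).mulVec u) = (raiseM G x D).mulVec (σ u)) ∧
    ∀ i : ℤ, ∀ u ∈ U, σ ((Estar G x i).mulVec u) = (Estar G x (i + n)).mulVec (σ u)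

end

/-! Put `U = Σ_n Q_n E*_j W`. As `Q_n E*_j W ⊆ E*_{n+j} W`, `U` lies in `W`, and it contains
`E*_j W ≠ 0` because `1 ∈ Q_0`. It is stable under each `Q_m` (as `Q_m Q_n ⊆ Q_{m+n}`), hence
under `A = L + F + R`, and under each `E*_k`, which acts on `Q_n E*_j W` as `δ_{k,n+j}`. So `U` is a
nonzero `T`-submodule of `W`, hence `U = W`, and applying `E*_{i+j}` to `U = W` leaves exactly the
summand `Q_i E*_j W`. -/

open Matrix

lemma map_mulVecLin_actSp_le {X : Type*} [Fintype X] {P P' : Submodule ℂ (Matrix X X ℂ)}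
    {S : Matrix X X ℂ} (hS : ∀ T ∈ P, S * T ∈ P') (V : Submodule ℂ (X → ℂ)) :
    (actSp P V).map S.mulVecLin ≤ actSp P' V := by
  rw [actSp, Submodule.map_span_le]
  rintro _ ⟨T, hT, v, hv, rfl⟩
  exact Submodule.subset_span ⟨S * T, hS T hT, v, hv, by rw [mulVecLin_apply, mulVec_mulVec]⟩

section

variable {X : Type*} [DecidableEq X] {G : SimpleGraph X} {x : X} {D : ℕ}

lemma Estar_eq_zero (hD : ∀ y, G.dist x y ≤ D) {k : ℤ} (hk : k ∉ Set.Icc 0 (D : ℤ)) :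
    Estar G x k = 0 := by
  rw [Estar, ← diagonal_zero]
  congr 1; ext y
  have := hD y
  simp only [Set.mem_Icc, not_and_or, not_le] at hk
  rw [if_neg (by omega)]

lemma sum_Estar (hD : ∀ y, G.dist x y ≤ D) :
    ∑ k ∈ Finset.range (D + 1), Estar G x k = 1 := by
  ext y z
  by_cases h : y = z
  · subst h
    simp [Estar, Matrix.sum_apply, Nat.lt_succ_of_le (hD y)]
  · simp [Estar, Matrix.sum_apply, h]

variable [Fintype X]

lemma Estar_mul_Estar (a b : ℤ) :
    Estar G x a * Estar G x b = if a = b then Estar G x a else 0 := by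
  unfold Estar
  simp_rw [diagonal_mul_diagonal, ite_zero_mul_ite_zero, mul_one]
  split_ifs with h
  · simp_rw [h, and_self]
  · rw [← diagonal_zero]; congr 1; ext y; rw [if_neg (by omega)]

-- The column condition comes first, so that sums over the column index collapse by `sum_ite_eq`.
lemma Estar_mul_mul_Estar_apply (M : Matrix X X ℂ) (a b : ℤ) (y z : X) :
    (Estar G x a * M * Estar G x b) y z =
      if (G.dist x z : ℤ) = b ∧ (G.dist x y : ℤ) = a then M y z else 0 := by
  simp only [Estar, mul_diagonal, diagonal_mul, ite_and]
  split_ifs <;> simp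

lemma Estar_mulVec_of_mem_Emap {m : ℤ} {W : Submodule ℂ (X → ℂ)} {v : X → ℂ}
    (hv : v ∈ Emap G x m W) (k : ℤ) : Estar G x k *ᵥ v = if k = m then v else 0 := by
  obtain ⟨w, -, rfl⟩ := hv
  simp only [mulVecLin_apply, mulVec_mulVec, Estar_mul_Estar]
  split_ifs with h
  · rw [h]
  · exact zero_mulVec w

lemma Emap_eq_of_le_Emap {m : ℤ} {V W : Submodule ℂ (X → ℂ)} (hV : V ≤ Emap G x m W) (k : ℤ) :
    Emap G x k V = if k = m then V else ⊥ := by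
  have hE {v} (hv : v ∈ V) : Estar G x k *ᵥ v = if k = m then v else 0 :=
    Estar_mulVec_of_mem_Emap (hV hv) k
  split_ifs with h
  · refine le_antisymm ?_ fun v hv => ⟨v, hv, by rw [mulVecLin_apply, hE hv, if_pos h]⟩
    rintro _ ⟨v, hv, rfl⟩
    rwa [mulVecLin_apply, hE hv, if_pos h]
  · refine eq_bot_iff.mpr ?_
    rintro _ ⟨v, hv, rfl⟩
    rw [mulVecLin_apply, hE hv, if_neg h]
    exact zero_mem _

lemma le_actSp {P : Submodule ℂ (Matrix X X ℂ)} (hP : 1 ∈ P) (V : Submodule ℂ (X → ℂ)) :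
    V ≤ actSp P V :=
  fun v hv => Submodule.subset_span ⟨1, hP, v, hv, (one_mulVec v).symm⟩

variable [DecidableRel G.Adj]

lemma lowerM_apply (hD : ∀ y, G.dist x y ≤ D) (y z : X) :
    lowerM G x D y z = if G.dist x z = G.dist x y + 1 then adjMat G y z else 0 := by
  simp only [lowerM, Matrix.sum_apply, Estar_mul_mul_Estar_apply, ite_and, Nat.cast_inj,
    Finset.sum_ite_eq, Finset.mem_Icc]
  have := hD z
  split_ifs <;> first | rfl | omega

lemma flatM_apply (hD : ∀ y, G.dist x y ≤ D) (y z : X) :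
    flatM G x D y z = if G.dist x z = G.dist x y then adjMat G y z else 0 := by
  simp only [flatM, Matrix.sum_apply, Estar_mul_mul_Estar_apply, ite_and, Nat.cast_inj,
    Finset.sum_ite_eq, Finset.mem_range]
  have := hD z
  split_ifs <;> first | rfl | omega

lemma raiseM_apply (hD : ∀ y, G.dist x y ≤ D) (y z : X) :
    raiseM G x D y z = if G.dist x y = G.dist x z + 1 then adjMat G y z else 0 := by
  simp only [raiseM, Matrix.sum_apply, Estar_mul_mul_Estar_apply, ite_and, Nat.cast_inj,
    Finset.sum_ite_eq, Finset.mem_range]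
  have := hD y
  split_ifs <;> first | rfl | omega

lemma adjMat_eq_lowerM_add_flatM_add_raiseM (hD : ∀ y, G.dist x y ≤ D) :
    adjMat G = lowerM G x D + flatM G x D + raiseM G x D := by
  ext y z
  rw [Matrix.add_apply, Matrix.add_apply, lowerM_apply hD, flatM_apply hD, raiseM_apply hD]
  by_cases hyz : G.Adj y z
  · rcases hyz.diff_dist_adj (u := x) with h | h | h <;> split_ifs <;> first | omega | simp
  · simp [adjMat, hyz]

lemma adjMat_mem_Talg : adjMat G ∈ Talg G x D :=
  Algebra.subset_adjoin (Set.mem_insert _ _)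

lemma Estar_mem_Talg (hD : ∀ y, G.dist x y ≤ D) (k : ℤ) : Estar G x k ∈ Talg G x D := by
  by_cases hk : k ∈ Set.Icc 0 (D : ℤ)
  · exact Algebra.subset_adjoin (Set.mem_insert_of_mem _ ⟨k, hk, rfl⟩)
  · rw [Estar_eq_zero hD hk]
    exact zero_mem _

lemma Qalg_le_Talg (hD : ∀ y, G.dist x y ≤ D) : Qalg G x D ≤ Talg G x D := by
  have hEAE (a b : ℤ) : Estar G x a * adjMat G * Estar G x b ∈ Talg G x D :=
    mul_mem (mul_mem (Estar_mem_Talg hD a) adjMat_mem_Talg) (Estar_mem_Talg hD b)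
  refine Algebra.adjoin_le ?_
  rintro S (rfl | rfl | rfl) <;> exact Subalgebra.sum_mem _ fun i _ => hEAE _ _

lemma Estar_mul_eq_mul_Estar_of_mem_Tgraded {n : ℤ} {S : Matrix X X ℂ}
    (hS : S ∈ Tgraded G x D n) (k : ℤ) : Estar G x k * S = S * Estar G x (k - n) := by
  induction hS using Submodule.span_induction with
  | mem S hS =>
    obtain ⟨i, S, -, rfl⟩ := hS
    simp only [← mul_assoc, Estar_mul_Estar]
    simp only [mul_assoc, Estar_mul_Estar]
    by_cases h : k = i + n
    · rw [if_pos h, if_pos (by omega), h]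
    · rw [if_neg h, if_neg (by omega)]
      simp
  | zero => simp
  | add a b _ _ ha hb => rw [mul_add, ha, hb, add_mul]
  | smul c a _ ha => rw [mul_smul_comm, ha, smul_mul_assoc]

lemma mul_mem_Tgraded {m n : ℤ} {S S' : Matrix X X ℂ} (hST : S ∈ Talg G x D)
    (hS : S ∈ Tgraded G x D m) (hS' : S' ∈ Tgraded G x D n) :
    S * S' ∈ Tgraded G x D (m + n) := by
  induction hS' using Submodule.span_induction with
  | mem S' h =>
    obtain ⟨i, S', hS', rfl⟩ := h
    refine Submodule.subset_span ⟨i, S * S', mul_mem hST hS', ?_⟩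
    have hc := Estar_mul_eq_mul_Estar_of_mem_Tgraded hS (i + (m + n))
    rw [show i + (m + n) - m = i + n by ring] at hc
    simp only [← mul_assoc, hc]
  | zero => rw [mul_zero]; exact zero_mem _
  | add a b _ _ ha hb => rw [mul_add]; exact add_mem ha hb
  | smul c a _ ha => rw [mul_smul_comm]; exact Submodule.smul_mem _ _ ha

lemma mul_mem_Qgraded (hD : ∀ y, G.dist x y ≤ D) {m n : ℤ} {S S' : Matrix X X ℂ}
    (hS : S ∈ Qgraded G x D m) (hS' : S' ∈ Qgraded G x D n) :
    S * S' ∈ Qgraded G x D (m + n) :=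
  ⟨(Qalg G x D).mul_mem hS.1 hS'.1, mul_mem_Tgraded (Qalg_le_Talg hD hS.1) hS.2 hS'.2⟩

lemma one_mem_Qgraded (hD : ∀ y, G.dist x y ≤ D) : (1 : Matrix X X ℂ) ∈ Qgraded G x D 0 := by
  refine ⟨(Qalg G x D).one_mem, ?_⟩
  rw [← sum_Estar hD]
  refine Submodule.sum_mem _ fun k _ => Submodule.subset_span ⟨k, 1, one_mem _, ?_⟩
  rw [add_zero, mul_one, Estar_mul_Estar, if_pos rfl]

lemma lowerM_mem_Qgraded : lowerM G x D ∈ Qgraded G x D (-1) :=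
  ⟨Algebra.subset_adjoin (by simp), Submodule.sum_mem _ fun i _ =>
    Submodule.subset_span ⟨i, adjMat G, adjMat_mem_Talg, by rw [← sub_eq_add_neg]⟩⟩

lemma flatM_mem_Qgraded : flatM G x D ∈ Qgraded G x D 0 :=
  ⟨Algebra.subset_adjoin (by simp), Submodule.sum_mem _ fun i _ =>
    Submodule.subset_span ⟨i, adjMat G, adjMat_mem_Talg, by rw [add_zero]⟩⟩

lemma raiseM_mem_Qgraded : raiseM G x D ∈ Qgraded G x D 1 :=
  ⟨Algebra.subset_adjoin (by simp), Submodule.sum_mem _ fun i _ =>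
    Submodule.subset_span ⟨i, adjMat G, adjMat_mem_Talg, rfl⟩⟩

lemma actSp_Qgraded_Emap_le {W : Submodule ℂ (X → ℂ)}
    (hW : ∀ S ∈ Qalg G x D, ∀ w ∈ W, S *ᵥ w ∈ W) (n j : ℤ) :
    actSp (Qgraded G x D n) (Emap G x j W) ≤ Emap G x (n + j) W := by
  refine Submodule.span_le.mpr ?_
  rintro _ ⟨S, hS, _, ⟨w, hw, rfl⟩, rfl⟩
  refine ⟨S *ᵥ w, hW S hS.1 w hw, ?_⟩
  have hc := Estar_mul_eq_mul_Estar_of_mem_Tgraded hS.2 (n + j)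
  rw [add_sub_cancel_left] at hc
  simp only [mulVecLin_apply, mulVec_mulVec, hc]

lemma mulVec_mem_of_mem_Talg {U : Submodule ℂ (X → ℂ)}
    (hA : U.map (adjMat G).mulVecLin ≤ U) (hE : ∀ k, Emap G x k U ≤ U) :
    ∀ S ∈ Talg G x D, ∀ u ∈ U, S *ᵥ u ∈ U := by
  intro S hS
  induction hS using Algebra.adjoin_induction with
  | mem S hS =>
    rcases hS with rfl | ⟨k, -, rfl⟩
    · exact fun u hu => hA (Submodule.mem_map_of_mem hu)
    · exact fun u hu => hE k (Submodule.mem_map_of_mem hu)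
  | algebraMap c =>
    intro u hu
    rw [Algebra.algebraMap_eq_smul_one, smul_mulVec, one_mulVec]
    exact U.smul_mem c hu
  | add S S' _ _ hS hS' => exact fun u hu => add_mulVec S S' u ▸ add_mem (hS u hu) (hS' u hu)
  | mul S S' _ _ hS hS' => exact fun u hu => mulVec_mulVec u S S' ▸ hS _ (hS' u hu)

variable {W : Submodule ℂ (X → ℂ)}

lemma IsIrredMod.mulVec_mem_of_mem_Qalg (hW : IsIrredMod (Talg G x D) W)
    (hD : ∀ y, G.dist x y ≤ D) : ∀ S ∈ Qalg G x D, ∀ w ∈ W, S *ᵥ w ∈ W :=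
  fun S hS => hW.1 S (Qalg_le_Talg hD hS)

lemma map_iSup_actSp_Qgraded_le (hD : ∀ y, G.dist x y ≤ D) {m : ℤ} {S : Matrix X X ℂ}
    (hS : S ∈ Qgraded G x D m) (V : Submodule ℂ (X → ℂ)) :
    (⨆ n, actSp (Qgraded G x D n) V).map S.mulVecLin ≤ ⨆ n, actSp (Qgraded G x D n) V := by
  rw [Submodule.map_iSup]
  exact iSup_le fun n => (map_mulVecLin_actSp_le (fun _ hT => mul_mem_Qgraded hD hS hT) V).trans
    (le_iSup (fun n => actSp (Qgraded G x D n) V) (m + n))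

lemma Emap_iSup_actSp_Qgraded_Emap_le (hW : ∀ S ∈ Qalg G x D, ∀ w ∈ W, S *ᵥ w ∈ W) (j k : ℤ) :
    Emap G x k (⨆ n, actSp (Qgraded G x D n) (Emap G x j W)) ≤
      ⨆ n, actSp (Qgraded G x D n) (Emap G x j W) := by
  rw [Emap, Submodule.map_iSup]
  refine iSup_mono fun n => ?_
  rw [← Emap, Emap_eq_of_le_Emap (actSp_Qgraded_Emap_le hW n j)]
  split_ifs
  exacts [le_rfl, bot_le]

theorem iSup_actSp_Qgraded_Emap_eq (hD : ∀ y, G.dist x y ≤ D) (hW : IsIrredMod (Talg G x D) W)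
    {j : ℤ} (hj : Emap G x j W ≠ ⊥) :
    ⨆ n, actSp (Qgraded G x D n) (Emap G x j W) = W := by
  have hWQ := hW.mulVec_mem_of_mem_Qalg hD
  set U := ⨆ n, actSp (Qgraded G x D n) (Emap G x j W)
  have hjU : Emap G x j W ≤ U :=
    (le_actSp (one_mem_Qgraded hD) _).trans (le_iSup (fun n => actSp (Qgraded G x D n) _) 0)
  have hUW : U ≤ W := iSup_le fun n => (actSp_Qgraded_Emap_le hWQ n j).trans
    (Submodule.map_le_iff_le_comap.mpr fun w hw => hW.1 _ (Estar_mem_Talg hD _) w hw)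
  have hAU : U.map (adjMat G).mulVecLin ≤ U := by
    rw [adjMat_eq_lowerM_add_flatM_add_raiseM hD, mulVecLin_add, mulVecLin_add]
    refine (Submodule.map_add_le _ _ _).trans (sup_le ((Submodule.map_add_le _ _ _).trans
      (sup_le ?_ ?_)) ?_)
    exacts [map_iSup_actSp_Qgraded_le hD lowerM_mem_Qgraded _,
      map_iSup_actSp_Qgraded_le hD flatM_mem_Qgraded _,
      map_iSup_actSp_Qgraded_le hD raiseM_mem_Qgraded _]
  refine (hW.2.2 U hUW (mulVec_mem_of_mem_Talg hAU
    (Emap_iSup_actSp_Qgraded_Emap_le hWQ j))).resolve_left ?_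
  exact fun hU => hj (eq_bot_iff.mpr (hU ▸ hjU))

end

theorem stmt14_general {X : Type*} [Fintype X] [DecidableEq X]
    (G : SimpleGraph X) [DecidableRel G.Adj] (x : X) (D : ℕ)
    (hD : ∀ y, G.dist x y ≤ D)
    (W : Submodule ℂ (X → ℂ)) (hW : IsIrredMod (Talg G x D) W)
    (r d : ℕ) (hrd : HasEndpointDiam G x W r d) :
    ∀ i j : ℤ, (r : ℤ) ≤ j → j ≤ (r : ℤ) + (d : ℤ) →
      actSp (Qgraded G x D i) (Emap G x j W) = Emap G x (i + j) W := by
  intro i j hrj hjd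
  have hWQ := hW.mulVec_mem_of_mem_Qalg hD
  refine le_antisymm (actSp_Qgraded_Emap_le hWQ i j) ?_
  calc Emap G x (i + j) W
      = Emap G x (i + j) (⨆ n, actSp (Qgraded G x D n) (Emap G x j W)) := by
        rw [iSup_actSp_Qgraded_Emap_eq hD hW ((hrd j).mpr ⟨hrj, hjd⟩)]
    _ = ⨆ n, Emap G x (i + j) (actSp (Qgraded G x D n) (Emap G x j W)) := Submodule.map_iSup _ _
    _ ≤ actSp (Qgraded G x D i) (Emap G x j W) := iSup_le fun n => by
        rw [Emap_eq_of_le_Emap (actSp_Qgraded_Emap_le hWQ n j)]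
        split_ifs with h
        exacts [(add_right_cancel h).symm ▸ le_rfl, bot_le]

theorem stmt14 {X : Type*} [Fintype X] [DecidableEq X]
    (G : SimpleGraph X) [DecidableRel G.Adj] (hG : G.Connected) (x : X) (D : ℕ)
    (hD : ∀ y, G.dist x y ≤ D) (hD2 : ∃ y, G.dist x y = D)
    (W : Submodule ℂ (X → ℂ)) (hW : IsIrredMod (Talg G x D) W)
    (r d : ℕ) (hrd : HasEndpointDiam G x W r d) :
    ∀ i j : ℤ, (r : ℤ) ≤ j → j ≤ (r : ℤ) + (d : ℤ) →
      actSp (Qgraded G x D i) (Emap G x j W) = Emap G x (i + j) W :=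
  stmt14_general G x D hD W hW r d hrd
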